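/- arXiv:0902.2390 — 6 statements merged into one kernel-verified Lean document; each statement's English description precedes it below -/
import Mathlib

section
/- Let F : ℝ → ℝ be twice differentiable with F'' not identically zero, let A : ℝ → ℝ be differentiable, and let α, β : ℝ → ℝ be twice differentiable and σ : ℝ → ℝ be differentiable. Suppose that for all x, y ∈ ℝ: −3F(y)α(x) + 3y·(α(x)A'(x) + A(x)α'(x) + α''(x)) − β(x)A'(x) − A(x)β'(x) + 2σ'(x) − β''(x) = 0. Then α(x) = 0 for all x ∈ ℝ. -/
theorem deriv_deriv_eq_zero_of_forall_eq_affine {F : ℝ → ℝ} {m b : ℝ}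
    (h : ∀ y, F y = m * y + b) (y : ℝ) : deriv (deriv F) y = 0 := by
  obtain rfl : F = fun y => m * y + b := funext h
  simp

theorem eq_zero_of_forall_mul_eq_affine {F : ℝ → ℝ} {a m b : ℝ}
    (h : ∀ y, a * F y = m * y + b) (hF : ∃ y, deriv (deriv F) y ≠ 0) : a = 0 := by
  by_contra ha
  obtain ⟨y, hy⟩ := hF
  refine hy (deriv_deriv_eq_zero_of_forall_eq_affine (m := m / a) (b := b / a) (fun z => ?_) y)
  field_simp
  linear_combination h z

theorem stmt9_general (F A α β σ : ℝ → ℝ)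
    (hFnz : ∃ y : ℝ, deriv (deriv F) y ≠ 0)
    (heq : ∀ x y : ℝ,
      -3 * F y * α x
        + 3 * y * (α x * deriv A x + A x * deriv α x + deriv (deriv α) x)
        - β x * deriv A x - A x * deriv β x + 2 * deriv σ x - deriv (deriv β) x = 0) :
    ∀ x : ℝ, α x = 0 := by
  intro x
  refine eq_zero_of_forall_mul_eq_affine (F := F)
    (m := α x * deriv A x + A x * deriv α x + deriv (deriv α) x)
    (b := (-β x * deriv A x - A x * deriv β x + 2 * deriv σ x - deriv (deriv β) x) / 3)
    (fun y => ?_) hFnz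
  linear_combination (-1 / 3 : ℝ) * heq x y

/-- If `F'' ≢ 0` and the first reduced determining equation
`-3F(y)α(x) + 3y(αA' + Aα' + α'') - βA' - Aβ' + 2σ' - β'' = 0` holds for
all `x, y`, then `α ≡ 0`. -/
theorem stmt9 (F A α β σ : ℝ → ℝ)
    (hF : Differentiable ℝ F) (hF' : Differentiable ℝ (deriv F))
    (hFnz : ∃ y : ℝ, deriv (deriv F) y ≠ 0)
    (hA : Differentiable ℝ A)
    (hα : Differentiable ℝ α) (hα' : Differentiable ℝ (deriv α))
    (hβ : Differentiable ℝ β) (hβ' : Differentiable ℝ (deriv β))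
    (hσ : Differentiable ℝ σ)
    (heq : ∀ x y : ℝ,
      -3 * F y * α x
        + 3 * y * (α x * deriv A x + A x * deriv α x + deriv (deriv α) x)
        - β x * deriv A x - A x * deriv β x + 2 * deriv σ x - deriv (deriv β) x = 0) :
    ∀ x : ℝ, α x = 0 :=
  stmt9_general F A α β σ hFnz heq
end

section
/- Let A : ℝ → ℝ be four times differentiable and θ ∈ ℝ. Define E₁ = 36A⁵ − 900A³A' + 2000A²A'' + 625A(4(A'² + θ) − 3A''') + 625(−5A'A'' + A'''') and E₂ = 9A⁴ − 180A²A' + 275AA'' + 25(7A'² + 25θ − 5A'''). Then E₁(x) = 4A(x)E₂(x) − 5E₂'(x) for all x. In particular, if E₂ vanishes identically then so does E₁. -/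
/-!
`E₂` is a polynomial in the 3-jet `(A, A', A'', A''')`, so by the product rule `E₂'` is a
polynomial in the 4-jet, and as a polynomial identity it equals `(4 A E₂ - E₁) / 5`.
If `E₂ ≡ 0` then `E₂' ≡ 0`, hence `E₁ ≡ 0`.
-/

-- `E₁` and `E₂` as polynomials in the jet: `a₁, …, a₄` stand for `A', …, A''''`.
def jetE₂ (θ a a₁ a₂ a₃ : ℝ) : ℝ :=
  9 * a ^ 4 - 180 * a ^ 2 * a₁ + 275 * a * a₂ + 25 * (7 * a₁ ^ 2 + 25 * θ - 5 * a₃)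

def jetE₁ (θ a a₁ a₂ a₃ a₄ : ℝ) : ℝ :=
  36 * a ^ 5 - 900 * a ^ 3 * a₁ + 2000 * a ^ 2 * a₂ + 625 * a * (4 * (a₁ ^ 2 + θ) - 3 * a₃)
    + 625 * (-5 * a₁ * a₂ + a₄)

theorem hasDerivAt_jetE₂ (θ : ℝ) {a a₁ a₂ a₃ : ℝ → ℝ} {a₄ x : ℝ}
    (h₀ : HasDerivAt a (a₁ x) x) (h₁ : HasDerivAt a₁ (a₂ x) x)
    (h₂ : HasDerivAt a₂ (a₃ x) x) (h₃ : HasDerivAt a₃ a₄ x) :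
    HasDerivAt (fun y => jetE₂ θ (a y) (a₁ y) (a₂ y) (a₃ y))
      ((4 * a x * jetE₂ θ (a x) (a₁ x) (a₂ x) (a₃ x)
        - jetE₁ θ (a x) (a₁ x) (a₂ x) (a₃ x) a₄) / 5) x := by
  have h := ((((h₀.fun_pow 4).const_mul 9).fun_sub
    (((h₀.fun_pow 2).const_mul 180).fun_mul h₁)).fun_add ((h₀.const_mul 275).fun_mul h₂)).fun_add
    (((((h₁.fun_pow 2).const_mul 7).add_const (25 * θ)).fun_sub (h₃.const_mul 5)).const_mul 25)
  refine h.congr_deriv ?_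
  norm_num [jetE₂, jetE₁]
  ring

/-- For `A` four times differentiable and the expressions
`E₁ = 36A⁵ - 900A³A' + 2000A²A'' + 625A(4(A'² + θ) - 3A''') + 625(-5A'A'' + A'''')`
and `E₂ = 9A⁴ - 180A²A' + 275AA'' + 25(7A'² + 25θ - 5A''')`, one has
`E₁ = 4AE₂ - 5E₂'`; in particular `E₂ ≡ 0` implies `E₁ ≡ 0`. -/
theorem stmt11 (A : ℝ → ℝ) (θ : ℝ)
    (hA : Differentiable ℝ A)
    (hA1 : Differentiable ℝ (deriv A))
    (hA2 : Differentiable ℝ (deriv (deriv A)))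
    (hA3 : Differentiable ℝ (deriv (deriv (deriv A))))
    (E₁ E₂ : ℝ → ℝ)
    (hE₁ : ∀ x : ℝ, E₁ x =
      36 * (A x) ^ 5 - 900 * (A x) ^ 3 * deriv A x
        + 2000 * (A x) ^ 2 * deriv (deriv A) x
        + 625 * (A x) * (4 * ((deriv A x) ^ 2 + θ) - 3 * deriv (deriv (deriv A)) x)
        + 625 * (-5 * deriv A x * deriv (deriv A) x
            + deriv (deriv (deriv (deriv A))) x))
    (hE₂ : ∀ x : ℝ, E₂ x =
      9 * (A x) ^ 4 - 180 * (A x) ^ 2 * deriv A x + 275 * (A x) * deriv (deriv A) x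
        + 25 * (7 * (deriv A x) ^ 2 + 25 * θ - 5 * deriv (deriv (deriv A)) x)) :
    (∀ x : ℝ, E₁ x = 4 * A x * E₂ x - 5 * deriv E₂ x) ∧
    ((∀ x : ℝ, E₂ x = 0) → ∀ x : ℝ, E₁ x = 0) := by
  have hE₂_jet : E₂ = fun y => jetE₂ θ (A y) (deriv A y) (deriv (deriv A) y)
      (deriv (deriv (deriv A)) y) :=
    funext hE₂
  have identity (x : ℝ) : E₁ x = 4 * A x * E₂ x - 5 * deriv E₂ x := by
    have hderiv := (hasDerivAt_jetE₂ θ (hA x).hasDerivAt (hA1 x).hasDerivAt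
      (hA2 x).hasDerivAt (hA3 x).hasDerivAt).deriv
    rw [← hE₂_jet] at hderiv
    rw [hderiv, hE₁, hE₂]
    simp only [jetE₁, jetE₂]
    ring
  refine ⟨identity, fun hzero x => ?_⟩
  rw [identity, hzero, show E₂ = fun _ => 0 from funext hzero, deriv_const]
  ring
end

section
/- Let θ = 0, and for real constants p and m consider A(x) = p/(x + m) on the interval x > −m. Then A satisfies E₂ = 9A⁴ − 180A²A' + 275AA'' + 25(7A'² − 5A''') = 0 identically on x > −m if and only if p ∈ {0, −15, −10/3, −5/3}. (Equivalently, (x+m)⁴·E₂ = p(9p³ + 180p² + 725p + 750), whose real roots are exactly these four values.) -/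
/-- For `θ = 0` and `A(x) = p/(x+m)` on `x > -m`, the
expression `E₂ = 9A⁴ - 180A²A' + 275AA'' + 25(7A'² - 5A''')` vanishes
identically on `x > -m` if and only if `p ∈ {0, -15, -10/3, -5/3}`;
equivalently `(x+m)⁴·E₂ = p(9p³ + 180p² + 725p + 750)`. -/
theorem stmt12 (p m : ℝ) (A : ℝ → ℝ) (hA : ∀ x : ℝ, A x = p / (x + m)) :
    ((∀ x : ℝ, -m < x →
        9 * (A x) ^ 4 - 180 * (A x) ^ 2 * deriv A x
          + 275 * (A x) * deriv (deriv A) x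
          + 25 * (7 * (deriv A x) ^ 2 - 5 * deriv (deriv (deriv A)) x) = 0) ↔
      (p = 0 ∨ p = -15 ∨ p = -10/3 ∨ p = -5/3)) ∧
    (∀ x : ℝ, -m < x →
      (x + m) ^ 4 *
        (9 * (A x) ^ 4 - 180 * (A x) ^ 2 * deriv A x
          + 275 * (A x) * deriv (deriv A) x
          + 25 * (7 * (deriv A x) ^ 2 - 5 * deriv (deriv (deriv A)) x)) =
        p * (9 * p ^ 3 + 180 * p ^ 2 + 725 * p + 750)) := by
  have hAfun : A = fun x => p / (x + m) := funext hA
  -- first derivative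
  have hd1 : ∀ x : ℝ, x ≠ -m → deriv A x = -p / (x + m) ^ 2 := by
    intro x hx
    have hne : x + m ≠ 0 := by intro h; apply hx; linarith
    have h : HasDerivAt A ((0 * (x + m) - p * 1) / (x + m) ^ 2) x := by
      rw [hAfun]
      exact (hasDerivAt_const x p).div ((hasDerivAt_id x).add_const m) hne
    rw [h.deriv]; ring
  have hopen : IsOpen {y : ℝ | y ≠ -m} := isOpen_compl_singleton
  have hev1 : ∀ x : ℝ, x ≠ -m → deriv A =ᶠ[nhds x] fun y => -p / (y + m) ^ 2 :=
    fun x hx => Filter.eventuallyEq_of_mem (hopen.mem_nhds hx) (fun y hy => hd1 y hy)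
  have hd2 : ∀ x : ℝ, x ≠ -m → deriv (deriv A) x = 2 * p / (x + m) ^ 3 := by
    intro x hx
    have hne : x + m ≠ 0 := by intro h; apply hx; linarith
    rw [(hev1 x hx).deriv_eq]
    have hden : HasDerivAt (fun y : ℝ => (y + m) ^ 2) (2 * (x + m) ^ 1 * 1) x :=
      (((hasDerivAt_id x).add_const m).pow 2)
    have hne2 : (x + m) ^ 2 ≠ 0 := pow_ne_zero _ hne
    have h : HasDerivAt (fun y : ℝ => -p / (y + m) ^ 2)
        ((0 * (x + m) ^ 2 - (-p) * (2 * (x + m) ^ 1 * 1)) / ((x + m) ^ 2) ^ 2) x :=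
      (hasDerivAt_const x (-p)).div hden hne2
    rw [h.deriv]; field_simp; ring
  have hev2 : ∀ x : ℝ, x ≠ -m → deriv (deriv A) =ᶠ[nhds x] fun y => 2 * p / (y + m) ^ 3 :=
    fun x hx => Filter.eventuallyEq_of_mem (hopen.mem_nhds hx) (fun y hy => hd2 y hy)
  have hd3 : ∀ x : ℝ, x ≠ -m → deriv (deriv (deriv A)) x = -6 * p / (x + m) ^ 4 := by
    intro x hx
    have hne : x + m ≠ 0 := by intro h; apply hx; linarith
    rw [(hev2 x hx).deriv_eq]
    have hden : HasDerivAt (fun y : ℝ => (y + m) ^ 3) (3 * (x + m) ^ 2 * 1) x :=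
      (((hasDerivAt_id x).add_const m).pow 3)
    have hne3 : (x + m) ^ 3 ≠ 0 := pow_ne_zero _ hne
    have h : HasDerivAt (fun y : ℝ => 2 * p / (y + m) ^ 3)
        ((0 * (x + m) ^ 3 - (2 * p) * (3 * (x + m) ^ 2 * 1)) / ((x + m) ^ 3) ^ 2) x :=
      (hasDerivAt_const x (2 * p)).div hden hne3
    rw [h.deriv]; field_simp; ring
  -- key identity
  have key : ∀ x : ℝ, -m < x →
      (x + m) ^ 4 *
        (9 * (A x) ^ 4 - 180 * (A x) ^ 2 * deriv A x
          + 275 * (A x) * deriv (deriv A) x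
          + 25 * (7 * (deriv A x) ^ 2 - 5 * deriv (deriv (deriv A)) x)) =
        p * (9 * p ^ 3 + 180 * p ^ 2 + 725 * p + 750) := by
    intro x hx
    have hx' : x ≠ -m := by intro h; rw [h] at hx; linarith
    have hne : x + m ≠ 0 := by intro h; apply hx'; linarith
    rw [hA, hd1 x hx', hd2 x hx', hd3 x hx']
    field_simp
    ring
  constructor
  · constructor
    · intro h
      have h1 : (1 : ℝ) - m > -m := by linarith
      have h2 := key (1 - m) h1
      rw [h (1 - m) h1, mul_zero] at h2
      have h3 : p * ((p + 15) * ((3 * p + 10) * (3 * p + 5))) = 0 := by linarith [h2]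
      rcases mul_eq_zero.1 h3 with h4 | h4
      · exact Or.inl h4
      rcases mul_eq_zero.1 h4 with h5 | h5
      · exact Or.inr (Or.inl (by linarith))
      rcases mul_eq_zero.1 h5 with h6 | h6
      · exact Or.inr (Or.inr (Or.inl (by linarith)))
      · exact Or.inr (Or.inr (Or.inr (by linarith)))
    · intro hp x hx
      have h2 := key x hx
      have hne : (x + m) ^ 4 ≠ 0 := by
        apply pow_ne_zero; intro h; rw [show x = -m by linarith] at hx; linarith
      have hz : p * (9 * p ^ 3 + 180 * p ^ 2 + 725 * p + 750) = 0 := by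
        rcases hp with h | h | h | h <;> rw [h] <;> norm_num
      rw [hz] at h2
      exact (mul_eq_zero.1 h2).resolve_left hne
  · exact key
end

section
/- Let A : ℝ → ℝ be twice differentiable and let n, λ be real constants. Define E₅ = 2A³(n² − 1) + A(3 + n)((n − 1)(3 + n)λ − 4nA') + (3 + n)²A'' and E₆ = −2A²(1 + n) + (3 + n)(−(3 + n)λ + 2A'). Then 2E₅(x) − (3 + n)E₆'(x) + 2(n − 1)A(x)E₆(x) = 0 for all x. In particular, if E₆ vanishes identically then so does E₅. -/
/-! Differentiating `E₆` gives `E₆' = -4(1 + n)AA' + 2(3 + n)A''`, and substituting this into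
`2E₅ - (3 + n)E₆' + 2(n - 1)AE₆` makes every term cancel. When `E₆ ≡ 0` also `E₆' ≡ 0`,
so the identity forces `E₅ ≡ 0`. -/

noncomputable section

namespace LieSymmetryCompatibility

def e₅ (A : ℝ → ℝ) (n lam : ℝ) (x : ℝ) : ℝ :=
  2 * A x ^ 3 * (n ^ 2 - 1) + A x * (3 + n) * ((n - 1) * (3 + n) * lam - 4 * n * deriv A x)
    + (3 + n) ^ 2 * deriv (deriv A) x

def e₆ (A : ℝ → ℝ) (n lam : ℝ) (x : ℝ) : ℝ :=
  -2 * A x ^ 2 * (1 + n) + (3 + n) * (-(3 + n) * lam + 2 * deriv A x)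

variable {A : ℝ → ℝ} {n lam x : ℝ}

theorem hasDerivAt_e₆ (hA : DifferentiableAt ℝ A x) (hA1 : DifferentiableAt ℝ (deriv A) x) :
    HasDerivAt (e₆ A n lam)
      (-4 * (1 + n) * A x * deriv A x + 2 * (3 + n) * deriv (deriv A) x) x := by
  have h := (((hA.hasDerivAt.pow 2).const_mul (-2 : ℝ)).mul_const (1 + n)).add
    (((hA1.hasDerivAt.const_mul (2 : ℝ)).const_add (-(3 + n) * lam)).const_mul (3 + n))
  exact h.congr_deriv (by ring)

theorem two_mul_e₅_eq (hA : DifferentiableAt ℝ A x) (hA1 : DifferentiableAt ℝ (deriv A) x) :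
    2 * e₅ A n lam x
      = (3 + n) * deriv (e₆ A n lam) x - 2 * (n - 1) * A x * e₆ A n lam x := by
  rw [(hasDerivAt_e₆ hA hA1).deriv, e₅, e₆]
  ring

theorem e₅_eq_zero_of_e₆_eq_zero (hA : DifferentiableAt ℝ A x)
    (hA1 : DifferentiableAt ℝ (deriv A) x) (h : e₆ A n lam = 0) : e₅ A n lam x = 0 := by
  simpa [h] using two_mul_e₅_eq hA hA1 (n := n) (lam := lam)

end LieSymmetryCompatibility

end

open LieSymmetryCompatibility

/-- For `A` twice differentiable and the expressions
`E₅ = 2A³(n² - 1) + A(3 + n)((n - 1)(3 + n)λ - 4nA') + (3 + n)²A''` and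
`E₆ = -2A²(1 + n) + (3 + n)(-(3 + n)λ + 2A')`, one has
`2E₅ - (3 + n)E₆' + 2(n - 1)AE₆ = 0`; in particular `E₆ ≡ 0` implies
`E₅ ≡ 0`. -/
theorem stmt15 (A : ℝ → ℝ) (n lam : ℝ)
    (hA : Differentiable ℝ A)
    (hA1 : Differentiable ℝ (deriv A))
    (E₅ E₆ : ℝ → ℝ)
    (hE₅ : ∀ x : ℝ, E₅ x =
      2 * (A x) ^ 3 * (n ^ 2 - 1)
        + A x * (3 + n) * ((n - 1) * (3 + n) * lam - 4 * n * deriv A x)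
        + (3 + n) ^ 2 * deriv (deriv A) x)
    (hE₆ : ∀ x : ℝ, E₆ x =
      -2 * (A x) ^ 2 * (1 + n) + (3 + n) * (-(3 + n) * lam + 2 * deriv A x)) :
    (∀ x : ℝ, 2 * E₅ x - (3 + n) * deriv E₆ x + 2 * (n - 1) * A x * E₆ x = 0) ∧
    ((∀ x : ℝ, E₆ x = 0) → ∀ x : ℝ, E₅ x = 0) := by
  obtain rfl : E₅ = e₅ A n lam := funext hE₅
  obtain rfl : E₆ = e₆ A n lam := funext hE₆
  refine ⟨fun x => ?_, fun h x => e₅_eq_zero_of_e₆_eq_zero (hA x) (hA1 x) (funext h)⟩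
  rw [two_mul_e₅_eq (hA x) (hA1 x)]
  ring
end

section
/- Let a, b, c, d be real constants with ad − bc = 1, and let I be an open interval with cx + d > 0 for all x ∈ I. Let y be a twice differentiable nonvanishing function satisfying y''(u) = y(u)^{−3} for all u in an open set containing {(ax + b)/(cx + d) : x ∈ I}. Define ỹ(x) = (cx + d)·y((ax + b)/(cx + d)) for x ∈ I. Then ỹ is twice differentiable, nonvanishing, and satisfies ỹ''(x) = ỹ(x)^{−3} for all x ∈ I. (This exhibits the three-parameter symmetry group of y'' = y^{−3}, the case A = 0, F = y^{−3} of y'' = A(x)y' + F(y), which is the unique nonlinear case with three-dimensional symmetry algebra.) -/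
/-!
With `L x = c x + d` and `w x = (a x + b) / (c x + d)` one has `w' = (ad - bc) / L²`, and two
applications of the chain rule give `ỹ' = c · y(w) + (ad - bc) · y'(w) / L` and then
`ỹ'' = (ad - bc)² · y''(w) / L³`: the terms in `y'(w)` cancel. When `ad - bc = 1` and
`y'' = y⁻³`, this is `y(w)⁻³ · L⁻³ = (L · y(w))⁻³ = ỹ⁻³`.
-/

open Filter Topology

noncomputable section

namespace Moebius

def map (a b c d : ℝ) (x : ℝ) : ℝ := (a * x + b) / (c * x + d)

def transform (a b c d : ℝ) (y : ℝ → ℝ) (x : ℝ) : ℝ := (c * x + d) * y (map a b c d x)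

variable {a b c d x : ℝ} {y : ℝ → ℝ}

theorem hasDerivAt_linear (c d x : ℝ) : HasDerivAt (fun t => c * t + d) c x := by
  simpa using ((hasDerivAt_id x).const_mul c).add_const d

theorem hasDerivAt_map (hx : c * x + d ≠ 0) :
    HasDerivAt (map a b c d) ((a * d - b * c) / (c * x + d) ^ 2) x := by
  refine ((hasDerivAt_linear a b x).div (hasDerivAt_linear c d x) hx).congr_deriv ?_
  ring

theorem hasDerivAt_transform (hx : c * x + d ≠ 0) (hy : DifferentiableAt ℝ y (map a b c d x)) :
    HasDerivAt (transform a b c d y)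
      (c * y (map a b c d x) + (a * d - b * c) * deriv y (map a b c d x) / (c * x + d)) x := by
  refine ((hasDerivAt_linear c d x).mul (hy.hasDerivAt.comp x (hasDerivAt_map hx))).congr_deriv ?_
  simp only [Function.comp_apply]
  field_simp

theorem hasDerivAt_deriv_transform
    (hx : ∀ᶠ t in 𝓝 x, c * t + d ≠ 0 ∧ DifferentiableAt ℝ y (map a b c d t))
    (hy' : DifferentiableAt ℝ (deriv y) (map a b c d x)) :
    HasDerivAt (deriv (transform a b c d y))
      ((a * d - b * c) ^ 2 * deriv (deriv y) (map a b c d x) / (c * x + d) ^ 3) x := by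
  obtain ⟨hL, hy⟩ := hx.self_of_nhds
  have hderiv : deriv (transform a b c d y) =ᶠ[𝓝 x] fun t =>
      c * y (map a b c d t) + (a * d - b * c) * deriv y (map a b c d t) / (c * t + d) :=
    hx.mono fun t ht => (hasDerivAt_transform ht.1 ht.2).deriv
  refine HasDerivAt.congr_of_eventuallyEq ?_ hderiv
  have hw := hasDerivAt_map (a := a) (b := b) hL
  refine (((hy.hasDerivAt.comp x hw).const_mul c).add
    (((hy'.hasDerivAt.comp x hw).const_mul (a * d - b * c)).div
      (hasDerivAt_linear c d x) hL)).congr_deriv ?_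
  simp only [Function.comp_apply]
  field_simp
  ring

end Moebius

end

open Moebius in
theorem stmt16_general (a b c d : ℝ) (habcd : a * d - b * c = 1)
    (p q : ℝ) (I : Set ℝ) (hI : I = Set.Ioo p q)
    (hcd : ∀ x ∈ I, 0 < c * x + d)
    (y : ℝ → ℝ) (U : Set ℝ)
    (himg : ∀ x ∈ I, (a * x + b) / (c * x + d) ∈ U)
    (hy : ∀ u ∈ U, DifferentiableAt ℝ y u)
    (hy' : ∀ u ∈ U, DifferentiableAt ℝ (deriv y) u)
    (hynz : ∀ u ∈ U, y u ≠ 0)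
    (hode : ∀ u ∈ U, deriv (deriv y) u = (y u) ^ (-3 : ℤ))
    (Y : ℝ → ℝ) (hY : ∀ x : ℝ, Y x = (c * x + d) * y ((a * x + b) / (c * x + d))) :
    ∀ x ∈ I, DifferentiableAt ℝ Y x ∧ DifferentiableAt ℝ (deriv Y) x ∧
      Y x ≠ 0 ∧ deriv (deriv Y) x = (Y x) ^ (-3 : ℤ) := by
  subst hI
  obtain rfl : Y = transform a b c d y := funext hY
  intro x hx
  have hnear : ∀ᶠ t in 𝓝 x, c * t + d ≠ 0 ∧ DifferentiableAt ℝ y (map a b c d t) := by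
    filter_upwards [isOpen_Ioo.mem_nhds hx] with t ht
    exact ⟨(hcd t ht).ne', hy _ (himg t ht)⟩
  have hL := (hcd x hx).ne'
  have hwU : map a b c d x ∈ U := himg x hx
  have hY'' := hasDerivAt_deriv_transform hnear (hy' _ hwU)
  refine ⟨(hasDerivAt_transform hL (hy _ hwU)).differentiableAt, hY''.differentiableAt,
    mul_ne_zero hL (hynz _ hwU), ?_⟩
  rw [hY''.deriv, habcd, hode _ hwU, transform, mul_zpow, zpow_neg (c * x + d), zpow_ofNat]
  ring

/-- Fractional-linear symmetry of `y'' = y⁻³`.  If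
`ad - bc = 1`, `cx + d > 0` on the open interval `I`, and `y` is twice
differentiable, nonvanishing and satisfies `y'' = y⁻³` on an open set `U`
containing `{(ax+b)/(cx+d) : x ∈ I}`, then
`ỹ(x) = (cx + d)·y((ax+b)/(cx+d))` is twice differentiable, nonvanishing
and satisfies `ỹ'' = ỹ⁻³` on `I`. -/
theorem stmt16 (a b c d : ℝ) (habcd : a * d - b * c = 1)
    (p q : ℝ) (I : Set ℝ) (hI : I = Set.Ioo p q)
    (hcd : ∀ x ∈ I, 0 < c * x + d)
    (y : ℝ → ℝ) (U : Set ℝ) (hU : IsOpen U)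
    (himg : ∀ x ∈ I, (a * x + b) / (c * x + d) ∈ U)
    (hy : ∀ u ∈ U, DifferentiableAt ℝ y u)
    (hy' : ∀ u ∈ U, DifferentiableAt ℝ (deriv y) u)
    (hynz : ∀ u ∈ U, y u ≠ 0)
    (hode : ∀ u ∈ U, deriv (deriv y) u = (y u) ^ (-3 : ℤ))
    (Y : ℝ → ℝ) (hY : ∀ x : ℝ, Y x = (c * x + d) * y ((a * x + b) / (c * x + d))) :
    ∀ x ∈ I, DifferentiableAt ℝ Y x ∧ DifferentiableAt ℝ (deriv Y) x ∧
      Y x ≠ 0 ∧ deriv (deriv Y) x = (Y x) ^ (-3 : ℤ) :=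
  stmt16_general a b c d habcd p q I hI hcd y U himg hy hy' hynz hode Y hY
end

section
/- Let μ > 0 and t ∈ ℝ, and set λ = μ²/4. Let y : ℝ → ℝ be twice differentiable and nonvanishing with y''(u) = y(u)^{−3} + λ·y(u) for all u ∈ ℝ. For z ∈ ℝ with 1 + t·e^{μz} > 0, define u(z) = −(1/μ)·ln(e^{−μz} + t) and ỹ(z) = (1 + t·e^{μz})^{1/2}·y(u(z)). Then on the open set {z : 1 + t·e^{μz} > 0}, ỹ is twice differentiable, nonvanishing, and satisfies ỹ''(z) = ỹ(z)^{−3} + λ·ỹ(z). (This is the one-parameter symmetry group generated by V = (e^{2√λ x}/(2√λ))∂ₓ + (e^{2√λ x}·y/2)∂_y of the equation y'' = y^{−3} + λy with A = 0, one of the three independent symmetries exhibiting the three-dimensional symmetry algebra of this equation.) -/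
/-!
Write `ỹ = c · (y ∘ u)` with `c = √(1 + t e^{μz})`. Then `u' = c⁻²`, and for any such pair
the first-order cross terms of `ỹ''` cancel, leaving `ỹ'' = c'' · y(u) + y''(u) / c³`.
Since `c' = (μ/2)(c - c⁻¹)`, one gets `c'' = λ (c - c⁻³)`, and substituting the equation for `y`
gives `ỹ'' = λ c y(u) + (c y(u))⁻³ = λ ỹ + ỹ⁻³`.
-/

open Filter Topology Real

section ProductWithReparametrization

variable {c u y : ℝ → ℝ} {z : ℝ}

theorem hasDerivAt_mul_comp_of_hasDerivAt_inv_sq {c' y' : ℝ} (hc : HasDerivAt c c' z)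
    (hu : HasDerivAt u (c z ^ 2)⁻¹ z) (hy : HasDerivAt y y' (u z)) :
    HasDerivAt (fun w => c w * y (u w)) (c' * y (u z) + y' / c z) z := by
  refine (hc.mul (hy.comp z hu)).congr_deriv ?_
  rw [Function.comp_apply, mul_left_comm, ← div_eq_mul_inv, sq, div_self_mul_self', div_eq_mul_inv]

theorem hasDerivAt_deriv_mul_comp_of_hasDerivAt_inv_sq {c' y' y'' : ℝ → ℝ} {c'' : ℝ}
    (hc : ∀ᶠ w in 𝓝 z, HasDerivAt c (c' w) w) (hc' : HasDerivAt c' c'' z)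
    (hu : ∀ᶠ w in 𝓝 z, HasDerivAt u (c w ^ 2)⁻¹ w) (hcz : c z ≠ 0)
    (hy : ∀ v, HasDerivAt y (y' v) v) (hy' : ∀ v, HasDerivAt y' (y'' v) v) :
    HasDerivAt (deriv fun w => c w * y (u w)) (c'' * y (u z) + y'' (u z) / c z ^ 3) z := by
  have hderiv : deriv (fun w => c w * y (u w)) =ᶠ[𝓝 z]
      fun w => c' w * y (u w) + y' (u w) / c w := by
    filter_upwards [hc, hu] with w hcw huw
    exact (hasDerivAt_mul_comp_of_hasDerivAt_inv_sq hcw huw (hy _)).deriv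
  have huz := hu.self_of_nhds
  refine (((hc'.mul ((hy _).comp z huz)).add
    (((hy' _).comp z huz).div hc.self_of_nhds hcz)).congr_of_eventuallyEq hderiv).congr_deriv ?_
  simp only [Function.comp_apply]
  field_simp
  ring

end ProductWithReparametrization

theorem hasDerivAt_mul_sub_inv {c : ℝ → ℝ} {a z : ℝ} (hc : HasDerivAt c (a * (c z - (c z)⁻¹)) z)
    (hcz : c z ≠ 0) :
    HasDerivAt (fun w => a * (c w - (c w)⁻¹)) (a ^ 2 * (c z - (c z ^ 3)⁻¹)) z := by
  refine ((hc.sub (hc.inv hcz)).const_mul a).congr_deriv ?_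
  field_simp
  ring

theorem hasDerivAt_sqrt_one_add_mul_exp {μ t z : ℝ} (hz : 0 < 1 + t * exp (μ * z)) :
    HasDerivAt (fun w => √(1 + t * exp (μ * w)))
      (μ / 2 * (√(1 + t * exp (μ * z)) - (√(1 + t * exp (μ * z)))⁻¹)) z := by
  have hs : HasDerivAt (fun w => 1 + t * exp (μ * w)) (t * (exp (μ * z) * μ)) z :=
    (((hasDerivAt_id z).const_mul μ).exp.const_mul t).const_add 1 |>.congr_deriv (by simp)
  refine (hs.sqrt hz.ne').congr_deriv ?_
  have hsq := sq_sqrt hz.le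
  have hne := (sqrt_pos.2 hz).ne'
  field_simp
  linear_combination (-μ) * hsq

theorem hasDerivAt_neg_inv_mul_log_exp_add {μ t z : ℝ} (hμ : μ ≠ 0)
    (hz : 0 < 1 + t * exp (μ * z)) :
    HasDerivAt (fun w => -(1 / μ) * log (exp (-(μ * w)) + t)) (1 + t * exp (μ * z))⁻¹ z := by
  have hfactor : exp (-(μ * z)) + t = exp (-(μ * z)) * (1 + t * exp (μ * z)) := by
    rw [mul_add, mul_one, ← mul_assoc, mul_comm _ t, mul_assoc, ← exp_add, neg_add_cancel,
      exp_zero, mul_one]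
  have hpos : exp (-(μ * z)) + t ≠ 0 := by
    rw [hfactor]; exact (mul_pos (exp_pos _) hz).ne'
  refine ((((hasDerivAt_id z).const_mul μ).neg.exp.add_const t).log hpos
    |>.const_mul _).congr_deriv ?_
  simp only [Pi.neg_apply, id, mul_one, hfactor]
  field_simp

/-- One-parameter symmetry of `y'' = y⁻³ + λy` with
`λ = μ²/4 > 0`: if `y` is a twice differentiable nonvanishing global
solution, then for `u(z) = -(1/μ)·ln(e^{-μz} + t)` and
`ỹ(z) = (1 + t·e^{μz})^{1/2}·y(u(z))`, on the open set
`{z : 1 + t·e^{μz} > 0}` the function `ỹ` is twice differentiable,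
nonvanishing, and satisfies `ỹ'' = ỹ⁻³ + λỹ`. -/
theorem stmt19 (μ t : ℝ) (hμ : 0 < μ) (lam : ℝ) (hlam : lam = μ ^ 2 / 4)
    (y : ℝ → ℝ) (hy : Differentiable ℝ y) (hy' : Differentiable ℝ (deriv y))
    (hynz : ∀ u : ℝ, y u ≠ 0)
    (hode : ∀ u : ℝ, deriv (deriv y) u = (y u) ^ (-3 : ℤ) + lam * y u)
    (u Y : ℝ → ℝ)
    (hu : ∀ z : ℝ, u z = -(1 / μ) * Real.log (Real.exp (-(μ * z)) + t))
    (hY : ∀ z : ℝ, Y z = Real.sqrt (1 + t * Real.exp (μ * z)) * y (u z)) :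
    ∀ z : ℝ, 0 < 1 + t * Real.exp (μ * z) →
      DifferentiableAt ℝ Y z ∧ DifferentiableAt ℝ (deriv Y) z ∧ Y z ≠ 0 ∧
      deriv (deriv Y) z = (Y z) ^ (-3 : ℤ) + lam * Y z := by
  intro z hz
  set c : ℝ → ℝ := fun w => √(1 + t * exp (μ * w))
  have hYc : Y = fun w => c w * y (u w) := funext hY
  have hpos : ∀ᶠ w in 𝓝 z, 0 < 1 + t * exp (μ * w) :=
    continuousAt_const.eventually_lt
      (by fun_prop : Continuous fun w => 1 + t * exp (μ * w)).continuousAt hz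
  have hcz : c z ≠ 0 := (sqrt_pos.2 hz).ne'
  have hc : ∀ᶠ w in 𝓝 z, HasDerivAt c (μ / 2 * (c w - (c w)⁻¹)) w :=
    hpos.mono fun w hw => hasDerivAt_sqrt_one_add_mul_exp hw
  have hu' : ∀ᶠ w in 𝓝 z, HasDerivAt u (c w ^ 2)⁻¹ w := hpos.mono fun w hw => by
    rw [funext hu, sq_sqrt hw.le]
    exact hasDerivAt_neg_inv_mul_log_exp_add hμ.ne' hw
  have hY'' := hasDerivAt_deriv_mul_comp_of_hasDerivAt_inv_sq hc
    (hasDerivAt_mul_sub_inv hc.self_of_nhds hcz) hu' hcz (fun v => (hy v).hasDerivAt)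
    (fun v => (hy' v).hasDerivAt)
  rw [← hYc] at hY''
  refine ⟨?_, hY''.differentiableAt, ?_, ?_⟩
  · rw [hYc]
    exact (hasDerivAt_mul_comp_of_hasDerivAt_inv_sq hc.self_of_nhds hu'.self_of_nhds
      (hy _).hasDerivAt).differentiableAt
  · rw [hY z]
    exact mul_ne_zero hcz (hynz _)
  · rw [hY''.deriv, hode, hY z, hlam]
    field_simp
    ring
end
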